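/- Let α be a composition of n. For every T ∈ SIT(α) there exist indices i_1,…,i_r (possibly r = 0) such that successively applying π_{i_1}^{RS*},…,π_{i_r}^{RS*} to T yields S^{row}_α. Consequently T ≼ S^{row}_α for all T ∈ SIT(α), i.e. S^{row}_α is the unique maximal element of the poset (SIT(α), ≼). -/
import Mathlib


open Classical

namespace ImmHecke

/-- A filling assigns a natural-number entry to each cell `(row, column)` (0-indexed);
row `0` is the bottom row.  Cells outside the diagram carry the junk value `0`. -/
abbrev Filling : Type := ℕ × ℕ → ℕ

/-- `c` is a cell of the diagram of the composition `α` (0-indexed rows and columns;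
row `i` has `α_i` cells). -/
def IsCell (α : List ℕ) (c : ℕ × ℕ) : Prop :=
  c.1 < α.length ∧ c.2 < α.getD c.1 0

/-- `α` is a composition of `n`: a list of positive integers summing to `n`. -/
def IsComposition (α : List ℕ) (n : ℕ) : Prop :=
  (∀ a ∈ α, 0 < a) ∧ α.sum = n

/-- `T` is a bijective filling of the diagram of `α` with the entries `1, …, n`
(where `n = α.sum`), and with value `0` off the diagram. -/
def IsStdFilling (α : List ℕ) (T : Filling) : Prop :=
  (∀ c, ¬ IsCell α c → T c = 0) ∧
  (∀ c, IsCell α c → 1 ≤ T c ∧ T c ≤ α.sum) ∧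
  (∀ c c', IsCell α c → IsCell α c' → T c = T c' → c = c') ∧
  (∀ m, 1 ≤ m → m ≤ α.sum → ∃ c, IsCell α c ∧ T c = m)

/-- A standard immaculate tableau of shape `α`: a bijective standard filling whose
first-column entries strictly increase bottom to top and whose rows strictly
increase left to right. -/
def IsSIT (α : List ℕ) (T : Filling) : Prop :=
  IsStdFilling α T ∧
  (∀ i i' : ℕ, IsCell α (i, 0) → IsCell α (i', 0) → i < i' → T (i, 0) < T (i', 0)) ∧
  (∀ i j j' : ℕ, IsCell α (i, j) → IsCell α (i, j') → j < j' → T (i, j) < T (i, j'))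

/-- A standard extended tableau of shape `α`: a bijective standard filling whose rows
strictly increase left to right and all of whose columns strictly increase
bottom to top.  Note `SET(α) ⊆ SIT(α)`. -/
def IsSET (α : List ℕ) (T : Filling) : Prop :=
  IsStdFilling α T ∧
  (∀ i j j' : ℕ, IsCell α (i, j) → IsCell α (i, j') → j < j' → T (i, j) < T (i, j')) ∧
  (∀ i i' j : ℕ, IsCell α (i, j) → IsCell α (i', j) → i < i' → T (i, j) < T (i', j))

/-- `SIT*(α)`: standard immaculate tableaux whose first column contains exactly the
entries `1, 2, …, ℓ(α)`. -/
def IsSITstar (α : List ℕ) (T : Filling) : Prop :=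
  IsSIT α T ∧
  (∀ i, IsCell α (i, 0) → 1 ≤ T (i, 0) ∧ T (i, 0) ≤ α.length) ∧
  (∀ m, 1 ≤ m → m ≤ α.length → ∃ i, IsCell α (i, 0) ∧ T (i, 0) = m)

/-- In `T`, the entry `m+1` lies in a row strictly above the row of `m`. -/
def SuccAbove (α : List ℕ) (T : Filling) (m : ℕ) : Prop :=
  ∃ c c', IsCell α c ∧ IsCell α c' ∧ T c = m ∧ T c' = m + 1 ∧ c.1 < c'.1

/-- In `T`, the entries `m` and `m+1` lie in the same row. -/
def SuccSameRow (α : List ℕ) (T : Filling) (m : ℕ) : Prop :=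
  ∃ c c', IsCell α c ∧ IsCell α c' ∧ T c = m ∧ T c' = m + 1 ∧ c.1 = c'.1

/-- In `T`, the entry `m+1` lies in a row strictly below the row of `m`. -/
def SuccBelow (α : List ℕ) (T : Filling) (m : ℕ) : Prop :=
  ∃ c c', IsCell α c ∧ IsCell α c' ∧ T c = m ∧ T c' = m + 1 ∧ c'.1 < c.1

/-- In `T`, the entries `m` and `m+1` are both in the first column. -/
def BothFirstColumn (α : List ℕ) (T : Filling) (m : ℕ) : Prop :=
  ∃ c c', IsCell α c ∧ IsCell α c' ∧ T c = m ∧ T c' = m + 1 ∧ c.2 = 0 ∧ c'.2 = 0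

/-- `s_i(T)`: exchange the entries `i` and `i+1` of `T`. -/
def swapEntries (i : ℕ) (T : Filling) : Filling :=
  fun c => if T c = i then i + 1 else if T c = i + 1 then i else T c

/-- The row-strict dual immaculate 0-Hecke operator `π_i^{RS*}` on `SIT(α) ∪ {0}`
(`0` is encoded as `none`): `π_i(T) = T` if `i+1` is strictly above `i`;
`π_i(T) = 0` if `i` and `i+1` are in the same row; `π_i(T) = s_i(T)` if `i+1` is
strictly below `i`. -/
noncomputable def piRS (α : List ℕ) (i : ℕ) : Option Filling → Option Filling
  | none => none
  | some T =>
    if SuccAbove α T i then some T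
    else if SuccSameRow α T i then none
    else some (swapEntries i T)

/-- The dual immaculate 0-Hecke operator `π_i^{S*}` on `SIT(α) ∪ {0}`:
`π_i(T) = T` if `i+1` is in a row weakly below `i`; `π_i(T) = 0` if `i` and `i+1`
are both in the first column; `π_i(T) = s_i(T)` if `i+1` is strictly above `i`
and `i, i+1` are not both in the first column. -/
noncomputable def piS (α : List ℕ) (i : ℕ) : Option Filling → Option Filling
  | none => none
  | some T =>
    if SuccSameRow α T i ∨ SuccBelow α T i then some T
    else if BothFirstColumn α T i then none
    else some (swapEntries i T)

/-- The 0-Hecke operator `π_i^{A*}` on `SIT(α)`: `π_i(T) = T` if `i+1` is strictly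
above `i` or in the same row as `i`; `π_i(T) = s_i(T)` if `i+1` is strictly below `i`. -/
noncomputable def piA (α : List ℕ) (i : ℕ) (T : Filling) : Filling :=
  if SuccBelow α T i then swapEntries i T else T

/-- The 0-Hecke operator `π_i^{Ā*}` on `SIT(α) ∪ {0}`: `π_i(T) = T` if `i+1` is
strictly below `i`; `π_i(T) = 0` if `i` and `i+1` are in the same row or both in
the first column; `π_i(T) = s_i(T)` if `i+1` is strictly above `i` and `i, i+1`
are not both in the first column. -/
noncomputable def piAbar (α : List ℕ) (i : ℕ) : Option Filling → Option Filling
  | none => none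
  | some T =>
    if SuccBelow α T i then some T
    else if SuccSameRow α T i ∨ BothFirstColumn α T i then none
    else some (swapEntries i T)

/-- `x` belongs to `SIT(α) ∪ {0}` (with `0 = none`). -/
def InSITZ (α : List ℕ) (x : Option Filling) : Prop :=
  ∀ T, x = some T → IsSIT α T

/-- Successively apply the operators `π_{i_1}^{RS*}, …, π_{i_r}^{RS*}` (the list `l = [i_1, …, i_r]`). -/
noncomputable def applySeqRS (α : List ℕ) (l : List ℕ) (x : Option Filling) : Option Filling :=
  l.foldl (fun y i => piRS α i y) x

/-- Successively apply the operators `π_{i_1}^{S*}, …, π_{i_r}^{S*}`. -/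
noncomputable def applySeqS (α : List ℕ) (l : List ℕ) (x : Option Filling) : Option Filling :=
  l.foldl (fun y i => piS α i y) x

/-- The relation `T₁ ≼ T₂` on `SIT(α)`: some sequence of operators `π_i^{RS*}`
(indices in `{1, …, n-1}`, possibly empty) sends `T₁` to `T₂`. -/
def preRS (α : List ℕ) (T₁ T₂ : Filling) : Prop :=
  ∃ l : List ℕ, (∀ i ∈ l, 1 ≤ i ∧ i ≤ α.sum - 1) ∧ applySeqRS α l (some T₁) = some T₂

/-- The one-line notation of `σ(T)`: read the entries of `T` from right to left in
each row, rows from top to bottom. -/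
def readingWord (α : List ℕ) (T : Filling) : List ℕ :=
  ((List.range α.length).reverse).flatMap
    (fun i => ((List.range (α.getD i 0)).map fun j => T (i, j)).reverse)

/-- The number of inversions of a word `w`: pairs of positions `p < q` with `w p > w q`. -/
def inversions (w : List ℕ) : ℕ :=
  ((Finset.range w.length ×ˢ Finset.range w.length).filter
    (fun pq : ℕ × ℕ => pq.1 < pq.2 ∧ w.getD pq.2 0 < w.getD pq.1 0)).card

/-- `S⁰_α`: first column contains `1, …, ℓ` bottom to top; the remaining cells are
filled with `ℓ+1, …, n` consecutively, reading rows from top to bottom and left to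
right within each row. -/
noncomputable def S0 (α : List ℕ) : Filling := fun c =>
  if IsCell α c then
    if c.2 = 0 then c.1 + 1
    else
      α.length + (((List.range α.length).filter fun r => c.1 < r).map fun r => α.getD r 0 - 1).sum + c.2
  else 0

/-- `S^{row}_α`: the row superstandard tableau, entries `1, …, n` placed consecutively
reading rows bottom to top, left to right within each row. -/
noncomputable def Srow (α : List ℕ) : Filling := fun c =>
  if IsCell α c then (α.take c.1).sum + c.2 + 1 else 0

/-- `S^{row*}_α`: first column contains `1, …, ℓ` bottom to top; the remaining cells
are filled with `ℓ+1, …, n` consecutively, reading rows bottom to top, left to right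
within each row. -/
noncomputable def SrowStar (α : List ℕ) : Filling := fun c =>
  if IsCell α c then
    if c.2 = 0 then c.1 + 1
    else α.length + ((List.range c.1).map fun r => α.getD r 0 - 1).sum + c.2
  else 0

/-- `S^{col}_α`: the column superstandard tableau, entries `1, …, n` placed
consecutively reading columns bottom to top, columns left to right. -/
noncomputable def Scol (α : List ℕ) : Filling := fun c =>
  if IsCell α c then
    ((List.range c.2).map fun j' =>
        ((List.range α.length).filter fun r => j' < α.getD r 0).length).sum
      + ((List.range c.1).filter fun r => c.2 < α.getD r 0).length + 1
  else 0

/-- The image of a basis element of `V_α` under the linearly extended operator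
`π_i^{RS*}` (the value `0` of the operator is interpreted as the zero vector). -/
noncomputable def piTargetRS (α : List ℕ) (i : ℕ) (T : {T : Filling // IsSIT α T}) :
    ({T : Filling // IsSIT α T} →₀ ℚ) :=
  match piRS α i (some T.val) with
  | none => 0
  | some T' => if h : IsSIT α T' then Finsupp.single ⟨T', h⟩ 1 else 0

/-- The operator `π_i^{RS*}` extended to a `ℚ`-linear endomorphism of the free
`ℚ`-vector space `V_α` with basis `SIT(α)`. -/
noncomputable def piRSLin (α : List ℕ) (i : ℕ) :
    ({T : Filling // IsSIT α T} →₀ ℚ) →ₗ[ℚ] ({T : Filling // IsSIT α T} →₀ ℚ) :=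
  Finsupp.lsum ℚ fun T => LinearMap.toSpanSingleton ℚ _ (piTargetRS α i T)

/-- The image of a basis element of `Z_α` under the linearly extended operator
`π_i^{RS*}`. -/
noncomputable def piTargetSET (α : List ℕ) (i : ℕ) (T : {T : Filling // IsSET α T}) :
    ({T : Filling // IsSET α T} →₀ ℚ) :=
  match piRS α i (some T.val) with
  | none => 0
  | some T' => if h : IsSET α T' then Finsupp.single ⟨T', h⟩ 1 else 0

/-- The operator `π_i^{RS*}` extended to a `ℚ`-linear endomorphism of the free
`ℚ`-vector space `Z_α` with basis `SET(α)`. -/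
noncomputable def piRSLinSET (α : List ℕ) (i : ℕ) :
    ({T : Filling // IsSET α T} →₀ ℚ) →ₗ[ℚ] ({T : Filling // IsSET α T} →₀ ℚ) :=
  Finsupp.lsum ℚ fun T => LinearMap.toSpanSingleton ℚ _ (piTargetSET α i T)


section AuxSrow

private lemma sum_take_le (l : List ℕ) (i : ℕ) : (l.take i).sum ≤ l.sum := by
  have h := List.sum_take_add_sum_drop l i
  omega

private lemma sum_take_mono (l : List ℕ) {i i' : ℕ} (h : i ≤ i') :
    (l.take i).sum ≤ (l.take i').sum := by
  have e : l.take i = (l.take i').take i := by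
    rw [List.take_take, Nat.min_eq_left h]
  rw [e]
  exact sum_take_le _ _

private lemma getD_eq (l : List ℕ) {i : ℕ} (h : i < l.length) : l.getD i 0 = l[i] :=
  List.getD_eq_getElem l 0 h

private lemma sum_take_succ' (l : List ℕ) {i : ℕ} (h : i < l.length) :
    (l.take (i+1)).sum = (l.take i).sum + l.getD i 0 := by
  rw [List.sum_take_succ l i h, getD_eq l h]

private lemma getD_pos {α : List ℕ} (hpos : ∀ a ∈ α, 0 < a) {i : ℕ} (h : i < α.length) :
    0 < α.getD i 0 := by
  rw [getD_eq α h]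
  exact hpos _ (List.getElem_mem h)

private lemma cell_lt_sum {α : List ℕ} {i j : ℕ} (hc : IsCell α (i, j)) :
    (α.take i).sum + j < α.sum := by
  have h1 : i < α.length := hc.1
  have h2 : j < α.getD i 0 := hc.2
  have e := sum_take_succ' α h1
  have l := sum_take_le α (i+1)
  omega

private lemma row_lt_val {α : List ℕ} {i j i' : ℕ} (hc : IsCell α (i, j)) (h : i < i') :
    (α.take i).sum + j + 1 ≤ (α.take i').sum := by
  have h1 : i < α.length := hc.1
  have h2 : j < α.getD i 0 := hc.2
  have e := sum_take_succ' α h1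
  have m := sum_take_mono α (show i + 1 ≤ i' from h)
  omega

private lemma Srow_cell {α : List ℕ} {i j : ℕ} (hc : IsCell α (i, j)) :
    Srow α (i, j) = (α.take i).sum + j + 1 := by simp [Srow, hc]

private lemma exists_decomp : ∀ (α : List ℕ) (m : ℕ), m < α.sum →
    ∃ i j : ℕ, IsCell α (i, j) ∧ (α.take i).sum + j = m
  | [], m, h => by simp at h
  | a :: α', m, h => by
    by_cases hm : m < a
    · exact ⟨0, m, ⟨by simp, by simpa [IsCell] using hm⟩, by simp⟩
    · have h' : m - a < α'.sum := by
        simp only [List.sum_cons] at h; omega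
      obtain ⟨i, j, hc, he⟩ := exists_decomp α' (m - a) h'
      have h1 : i < α'.length := hc.1
      have h2 : j < α'.getD i 0 := hc.2
      refine ⟨i + 1, j, ⟨by simpa using h1, by simpa [IsCell] using h2⟩, ?_⟩
      simp only [List.take_succ_cons, List.sum_cons]
      omega

private lemma Srow_isSIT {α : List ℕ} (hpos : ∀ a ∈ α, 0 < a) : IsSIT α (Srow α) := by
  refine ⟨⟨fun c hc => by simp [Srow, hc], ?_, ?_, ?_⟩, ?_, ?_⟩
  · rintro ⟨i, j⟩ hc
    rw [Srow_cell hc]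
    have := cell_lt_sum hc
    omega
  · rintro ⟨i, j⟩ ⟨i', j'⟩ hc hc' he
    rw [Srow_cell hc, Srow_cell hc'] at he
    rcases Nat.lt_trichotomy i i' with h | h | h
    · have h1 := row_lt_val hc h
      have h2 : (α.take i').sum ≤ (α.take i').sum + j' := Nat.le_add_right _ _
      exfalso; omega
    · subst h
      have : j = j' := by omega
      rw [this]
    · have h1 := row_lt_val hc' h
      exfalso; omega
  · intro m h1 h2
    obtain ⟨i, j, hc, he⟩ := exists_decomp α (m - 1) (by omega)
    exact ⟨(i, j), hc, by rw [Srow_cell hc]; omega⟩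
  · intro i i' h h' hlt
    rw [Srow_cell h, Srow_cell h']
    have := row_lt_val h hlt
    have h2 : (α.take i').sum ≤ (α.take i').sum + 0 := Nat.le_add_right _ _
    omega
  · intro i j j' h h' hlt
    rw [Srow_cell h, Srow_cell h']
    omega

private lemma swapEntries_apply (m : ℕ) (T : Filling) (d : ℕ × ℕ) :
    swapEntries m T d = if T d = m then m + 1 else if T d = m + 1 then m else T d := rfl

private lemma swap_isSIT {α : List ℕ} {T : Filling} {m : ℕ} (hT : IsSIT α T)
    (hb : SuccBelow α T m) : IsSIT α (swapEntries m T) := by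
  obtain ⟨c, c', hc, hc', hTc, hTc', hrow⟩ := hb
  obtain ⟨⟨hoff, hbd, hinj, hsurj⟩, hcol, hrows⟩ := hT
  have hm1 : 1 ≤ m := by have := (hbd c hc).1; omega
  have hmn : m + 1 ≤ α.sum := by have := (hbd c' hc').2; omega
  have hne : c ≠ c' := by intro h; rw [h, hTc'] at hTc; omega
  have val_excep : ∀ d d' : ℕ × ℕ, IsCell α d → IsCell α d' → T d = m → T d' = m + 1 →
      d = c ∧ d' = c' := fun d d' hd hd' h1 h2 =>
    ⟨hinj d c hd hc (by omega), hinj d' c' hd' hc' (by omega)⟩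
  refine ⟨⟨?_, ?_, ?_, ?_⟩, ?_, ?_⟩
  · intro d hd
    have h0 := hoff d hd
    rw [swapEntries_apply, h0]
    split_ifs <;> first | omega | tauto
  · intro d hd
    have h0 := hbd d hd
    rw [swapEntries_apply]
    split_ifs <;> first | omega | tauto
  · intro d d' hd hd' he
    apply hinj d d' hd hd'
    rw [swapEntries_apply, swapEntries_apply] at he
    have i1 : T d = m → d = c := fun h => hinj d c hd hc (by omega)
    have i2 : T d' = m → d' = c := fun h => hinj d' c hd' hc (by omega)
    have i3 : T d = m + 1 → d = c' := fun h => hinj d c' hd hc' (by omega)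
    have i4 : T d' = m + 1 → d' = c' := fun h => hinj d' c' hd' hc' (by omega)
    split_ifs at he <;> first | omega | tauto
  · intro k h1 h2
    by_cases hk1 : k = m
    · obtain ⟨d, hd, hTd⟩ := hsurj (m + 1) (by omega) hmn
      refine ⟨d, hd, ?_⟩
      rw [swapEntries_apply, hTd]
      split_ifs <;> first | omega | tauto
    · by_cases hk2 : k = m + 1
      · obtain ⟨d, hd, hTd⟩ := hsurj m hm1 (by omega)
        refine ⟨d, hd, ?_⟩
        rw [swapEntries_apply, hTd]
        split_ifs <;> first | omega | tauto
      · obtain ⟨d, hd, hTd⟩ := hsurj k h1 h2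
        refine ⟨d, hd, ?_⟩
        rw [swapEntries_apply, hTd]
        split_ifs <;> first | omega | tauto
  · intro i i' h h' hlt
    have horig := hcol i i' h h' hlt
    have hex : ¬ (T (i, 0) = m ∧ T (i', 0) = m + 1) := by
      rintro ⟨e1, e2⟩
      obtain ⟨f1, f2⟩ := val_excep _ _ h h' e1 e2
      have g1 : i = c.1 := by rw [← f1]
      have g2 : i' = c'.1 := by rw [← f2]
      omega
    rw [swapEntries_apply, swapEntries_apply]
    split_ifs <;> first | omega | tauto
  · intro i j j' h h' hlt
    have horig := hrows i j j' h h' hlt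
    have hex : ¬ (T (i, j) = m ∧ T (i, j') = m + 1) := by
      rintro ⟨e1, e2⟩
      obtain ⟨f1, f2⟩ := val_excep _ _ h h' e1 e2
      have g1 : i = c.1 := by rw [← f1]
      have g2 : i = c'.1 := by rw [← f2]
      omega
    rw [swapEntries_apply, swapEntries_apply]
    split_ifs <;> first | omega | tauto

private lemma piRS_succBelow {α : List ℕ} {T : Filling} {m : ℕ} (hT : IsSIT α T)
    (hb : SuccBelow α T m) : piRS α m (some T) = some (swapEntries m T) := by
  obtain ⟨c, c', hc, hc', hTc, hTc', hrow⟩ := hb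
  have hinj := hT.1.2.2.1
  have hna : ¬ SuccAbove α T m := by
    rintro ⟨d, d', hd, hd', h1, h2, h3⟩
    have e1 := hinj d c hd hc (by omega)
    have e2 := hinj d' c' hd' hc' (by omega)
    rw [e1, e2] at h3
    omega
  have hns : ¬ SuccSameRow α T m := by
    rintro ⟨d, d', hd, hd', h1, h2, h3⟩
    have e1 := hinj d c hd hc (by omega)
    have e2 := hinj d' c' hd' hc' (by omega)
    rw [e1, e2] at h3
    omega
  simp [piRS, hna, hns]

private noncomputable def cellsF (α : List ℕ) : Finset (ℕ × ℕ) :=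
  (Finset.range α.length ×ˢ Finset.range α.sum).filter (fun c => IsCell α c)

private lemma mem_cellsF {α : List ℕ} {c : ℕ × ℕ} : c ∈ cellsF α ↔ IsCell α c := by
  simp only [cellsF, Finset.mem_filter, Finset.mem_product, Finset.mem_range]
  constructor
  · tauto
  · intro h
    refine ⟨⟨h.1, ?_⟩, h⟩
    have h2 := h.2
    have h3 : α.getD c.1 0 ≤ α.sum := by
      rw [getD_eq α h.1]
      exact List.le_sum_of_mem (List.getElem_mem h.1)
    omega

private noncomputable def wt (α : List ℕ) (T : Filling) : ℕ :=
  ∑ c ∈ cellsF α, c.1 * T c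

private lemma wt_le (α : List ℕ) (T : Filling) (hT : IsStdFilling α T) :
    wt α T ≤ (α.length * α.sum) * (α.length * α.sum) := by
  calc wt α T ≤ ∑ _c ∈ cellsF α, α.length * α.sum := by
        apply Finset.sum_le_sum
        intro c hc
        rw [mem_cellsF] at hc
        exact Nat.mul_le_mul (le_of_lt hc.1) (hT.2.1 c hc).2
    _ = (cellsF α).card * (α.length * α.sum) := by
        rw [Finset.sum_const, smul_eq_mul]
    _ ≤ (α.length * α.sum) * (α.length * α.sum) := by
        apply Nat.mul_le_mul_right
        calc (cellsF α).card ≤ (Finset.range α.length ×ˢ Finset.range α.sum).card :=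
              Finset.card_filter_le _ _
          _ = α.length * α.sum := by simp

private lemma wt_swap {α : List ℕ} {T : Filling} {m : ℕ} (hT : IsSIT α T)
    (hb : SuccBelow α T m) : wt α T < wt α (swapEntries m T) := by
  obtain ⟨c, c', hc, hc', hTc, hTc', hrow⟩ := hb
  have hinj := hT.1.2.2.1
  have hne : c ≠ c' := by intro h; rw [h, hTc'] at hTc; omega
  have key : ∀ d ∈ cellsF α,
      d.1 * swapEntries m T d + (if d = c' then c'.1 else 0)
        = d.1 * T d + (if d = c then c.1 else 0) := by
    intro d hd
    rw [mem_cellsF] at hd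
    rw [swapEntries_apply]
    by_cases h1 : d = c
    · subst h1
      rw [if_pos hTc, if_neg hne, if_pos rfl, hTc]
      ring
    · by_cases h2 : d = c'
      · subst h2
        have hm' : T d ≠ m := by omega
        rw [if_neg hm', if_pos hTc', if_pos rfl, if_neg h1, hTc']
        ring
      · have hm : T d ≠ m := fun h => h1 (hinj d c hd hc (by omega))
        have hm1 : T d ≠ m + 1 := fun h => h2 (hinj d c' hd hc' (by omega))
        rw [if_neg hm, if_neg hm1, if_neg h2, if_neg h1]
  have hsum := Finset.sum_congr rfl key
  have e1 : (∑ x ∈ cellsF α, if x = c' then c'.1 else 0) = c'.1 := by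
    rw [Finset.sum_ite_eq' (cellsF α) c' (fun _ => c'.1), if_pos (mem_cellsF.2 hc')]
  have e2 : (∑ x ∈ cellsF α, if x = c then c.1 else 0) = c.1 := by
    rw [Finset.sum_ite_eq' (cellsF α) c (fun _ => c.1), if_pos (mem_cellsF.2 hc)]
  rw [Finset.sum_add_distrib, Finset.sum_add_distrib, e1, e2] at hsum
  have hr : c'.1 < c.1 := hrow
  unfold wt
  omega

private lemma no_succBelow_eq_Srow {α : List ℕ} {T : Filling} (hpos : ∀ a ∈ α, 0 < a)
    (hT : IsSIT α T) (hnb : ∀ m, ¬ SuccBelow α T m) : T = Srow α := by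
  obtain ⟨⟨hoff, hbd, hinj, hsurj⟩, hcol, hrows⟩ := hT
  have hmono : ∀ d : ℕ, ∀ e e' : ℕ × ℕ, IsCell α e → IsCell α e' →
      T e' = T e + d → e.1 ≤ e'.1 := by
    intro d
    induction d with
    | zero =>
      intro e e' he he' hd
      have h := hinj e e' he he' (by omega)
      rw [h]
    | succ d ih =>
      intro e e' he he' hd
      obtain ⟨e'', he'', hTe''⟩ := hsurj (T e + d)
        (by have := (hbd e he).1; omega)
        (by have := (hbd e' he').2; omega)
      have h1 : e.1 ≤ e''.1 := ih e e'' he he'' hTe''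
      have h2 : ¬ (e'.1 < e''.1) := fun hlt =>
        hnb (T e + d) ⟨e'', e', he'', he', hTe'', by omega, hlt⟩
      omega
  have hmono' : ∀ e e' : ℕ × ℕ, IsCell α e → IsCell α e' → T e ≤ T e' → e.1 ≤ e'.1 :=
    fun e e' he he' h => hmono (T e' - T e) e e' he he' (by omega)
  have main : ∀ m : ℕ, ∀ c : ℕ × ℕ, IsCell α c → T c = m + 1 → Srow α c = m + 1 := by
    intro m
    induction m with
    | zero =>
      rintro ⟨i, j⟩ hc hTc
      have hi1 : i < α.length := hc.1
      have hj1 : j < α.getD i 0 := hc.2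
      have hj : j = 0 := by
        by_contra h
        have hcell : IsCell α (i, j - 1) := ⟨hi1, show j - 1 < α.getD i 0 by omega⟩
        have h2 := hrows i (j - 1) j hcell hc (by omega)
        have h3 := (hbd _ hcell).1
        omega
      subst hj
      have hi : i = 0 := by
        by_contra h
        have hcell : IsCell α (0, 0) := ⟨show 0 < α.length by omega, getD_pos hpos (by omega)⟩
        have h2 := hcol 0 i hcell hc (by omega)
        have h3 := (hbd _ hcell).1
        omega
      subst hi
      rw [Srow_cell hc]
      simp
    | succ m ih =>
      rintro ⟨i', j'⟩ hc' hTc'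
      obtain ⟨c, hc, hTc⟩ := hsurj (m + 1) (by omega) (by have := (hbd _ hc').2; omega)
      obtain ⟨i, j⟩ := c
      have hS := ih (i, j) hc hTc
      rw [Srow_cell hc] at hS
      have hi1 : i < α.length := hc.1
      have hj1 : j < α.getD i 0 := hc.2
      have hi'1 : i' < α.length := hc'.1
      have hj'1 : j' < α.getD i' 0 := hc'.2
      have hge : i ≤ i' := hmono' (i, j) (i', j') hc hc' (by omega)
      by_cases hend : j + 1 < α.getD i 0
      · have hcell : IsCell α (i, j + 1) := ⟨hi1, hend⟩
        have h1 : m + 1 < T (i, j + 1) := by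
          have := hrows i j (j + 1) hc hcell (by omega); omega
        have hv : T (i, j + 1) = m + 2 := by
          by_contra hv
          have h2 : i' ≤ i := hmono' (i', j') (i, j + 1) hc' hcell (by omega)
          have h3 : i' = i := by omega
          subst h3
          have hj2 : j < j' := by
            rcases Nat.lt_trichotomy j j' with h | h | h
            · exact h
            · rw [← h] at hTc'; omega
            · have := hrows i' j' j hc' hc h; omega
          have hj3 : j' < j + 1 := by
            rcases Nat.lt_trichotomy j' (j + 1) with h | h | h
            · exact h
            · rw [h] at hTc'; omega
            · have := hrows i' (j + 1) j' hcell hc' h; omega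
          omega
        have heq : (i', j') = (i, j + 1) := hinj _ _ hc' hcell (by omega)
        rw [heq, Srow_cell hcell]
        omega
      · have hii : i < i' := by
          rcases Nat.lt_or_ge i i' with h | h
          · exact h
          · exfalso
            have h3 : i' = i := by omega
            subst h3
            have hj2 : j < j' := by
              rcases Nat.lt_trichotomy j j' with h | h | h
              · exact h
              · rw [← h] at hTc'; omega
              · have := hrows i' j' j hc' hc h; omega
            omega
        have hj0 : j' = 0 := by
          by_contra h
          have hcell2 : IsCell α (i', j' - 1) := ⟨hi'1, show j' - 1 < α.getD i' 0 by omega⟩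
          have h1 := hrows i' (j' - 1) j' hcell2 hc' (by omega)
          have h2 : i' ≤ i := hmono' (i', j' - 1) (i, j) hcell2 hc (by omega)
          omega
        subst hj0
        have hi1' : i' = i + 1 := by
          by_contra h
          have hlt : i + 1 < i' := by omega
          have hcell3 : IsCell α (i + 1, 0) := ⟨show i + 1 < α.length by omega, getD_pos hpos (by omega)⟩
          have h1 := hcol (i + 1) i' hcell3 hc' hlt
          have h2 : i + 1 ≤ i := hmono' (i + 1, 0) (i, j) hcell3 hc (by omega)
          omega
        subst hi1'
        rw [Srow_cell hc']
        have e := sum_take_succ' α hi1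
        omega
  funext c
  by_cases hc : IsCell α c
  · have h1 := (hbd c hc).1
    have h2 := main (T c - 1) c hc (by omega)
    omega
  · rw [hoff c hc]
    simp [Srow, hc]

private lemma reach (α : List ℕ) (hpos : ∀ a ∈ α, 0 < a) :
    ∀ k : ℕ, ∀ T : Filling, IsSIT α T →
      (α.length * α.sum) * (α.length * α.sum) + 1 - wt α T ≤ k →
      preRS α T (Srow α) := by
  intro k
  induction k with
  | zero =>
    intro T hT hk
    exfalso
    have := wt_le α T hT.1
    omega
  | succ k ih =>
    intro T hT hk
    by_cases heq : T = Srow α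
    · exact ⟨[], by simp, by simp [applySeqRS, heq]⟩
    · have hex : ∃ m, SuccBelow α T m := by
        by_contra h
        push_neg at h
        exact heq (no_succBelow_eq_Srow hpos hT h)
      obtain ⟨m, hb⟩ := hex
      have hT' := swap_isSIT hT hb
      have hwt := wt_swap hT hb
      have hwt' := wt_le α (swapEntries m T) hT'.1
      obtain ⟨l, hl, happ⟩ := ih (swapEntries m T) hT' (by omega)
      obtain ⟨c, c', hc, hc', hTc, hTc', hr⟩ := hb
      have hm1 : 1 ≤ m := by have := (hT.1.2.1 c hc).1; omega
      have hm2 : m ≤ α.sum - 1 := by have := (hT.1.2.1 c' hc').2; omega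
      refine ⟨m :: l, ?_, ?_⟩
      · intro i hi
        rcases List.mem_cons.1 hi with h | h
        · omega
        · exact hl i h
      · simp only [applySeqRS, List.foldl_cons] at happ ⊢
        rw [piRS_succBelow hT ⟨c, c', hc, hc', hTc, hTc', hr⟩]
        exact happ

end AuxSrow

theorem Srow_unique_maximal (n : ℕ) (α : List ℕ) (hα : IsComposition α n) :
    IsSIT α (Srow α) ∧
    (∀ T, IsSIT α T → preRS α T (Srow α)) ∧
    (∀ M, IsSIT α M → (∀ T, IsSIT α T → preRS α M T → T = M) → M = Srow α) := by
  obtain ⟨hpos, hsum⟩ := hα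
  have h1 : IsSIT α (Srow α) := Srow_isSIT hpos
  have h2 : ∀ T, IsSIT α T → preRS α T (Srow α) := fun T hT =>
    reach α hpos ((α.length * α.sum) * (α.length * α.sum) + 1 - wt α T) T hT le_rfl
  exact ⟨h1, h2, fun M hM hmax => (hmax (Srow α) h1 (h2 M hM)).symm⟩


end ImmHecke
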